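/- arXiv:math/0306302 — 4 statements merged into one kernel-verified Lean document; each statement's English description precedes it below -/
import Mathlib

section
/- If the remainders of a sequence satisfy s_n - s = c·ω_n for a fixed nonzero constant c and all n, and the ω_n are such that Δ^k(P_{k-1}(n)/ω_n) ≠ 0 for a polynomial P_{k-1} of degree ≤ k-1, then the transformation T_k^{(n)} = Δ^k[P_{k-1}(n)·s_n/ω_n] / Δ^k[P_{k-1}(n)/ω_n] is exact: T_k^{(n)} = s. -/
/-!
Writing `s_m = L + c ω_m`, the numerator sequence is `P(m) s_m / ω_m = c P(m) + L P(m) / ω_m`.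
The first summand is a polynomial of degree `< k`, which `Δ^k` annihilates, so by linearity the
numerator of `T_k` is `L` times its denominator.
-/

/-- Forward difference operator: `Δ f n = f (n+1) - f n`. -/
def fdiff (f : ℕ → ℝ) : ℕ → ℝ := fun n => f (n + 1) - f n

open Polynomial

theorem fdiff_eq_fwdDiff : fdiff = fwdDiff 1 := rfl

theorem fwdDiff_iter_comp_addMonoidHom {M M' G : Type*} [AddCommMonoid M] [AddCommMonoid M']
    [AddCommGroup G] (φ : M →+ M') (h : M) (f : M' → G) (k : ℕ) :
    (fwdDiff h)^[k] (f ∘ φ) = (fwdDiff (φ h))^[k] f ∘ φ := by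
  induction k generalizing f with
  | zero => rfl
  | succ k ih =>
    have hstep : fwdDiff h (f ∘ φ) = fwdDiff (φ h) f ∘ φ := funext fun y => by
      simp only [fwdDiff, Function.comp_apply, map_add]
    rw [Function.iterate_succ_apply, hstep, ih, Function.iterate_succ_apply]

theorem Polynomial.fwdDiff_iter_eval_natCast_eq_zero {R : Type*} [CommRing R] {P : R[X]} {k : ℕ}
    (hP : P.natDegree < k) : (fwdDiff 1)^[k] (fun m : ℕ => P.eval (m : R)) = 0 := by
  have h := fwdDiff_iter_comp_addMonoidHom (Nat.castAddMonoidHom R) 1 P.eval k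
  rw [Nat.coe_castAddMonoidHom, Nat.cast_one, fwdDiff_iter_eq_zero_of_degree_lt hP] at h
  exact h

theorem levin_type_exactness_general (k : ℕ) (hk : 1 ≤ k) (s ω : ℕ → ℝ) (L c : ℝ)
    (hω : ∀ n, ω n ≠ 0) (hrel : ∀ n, s n - L = c * ω n)
    (P : Polynomial ℝ) (hP : P.natDegree ≤ k - 1) (n : ℕ)
    (hden : fdiff^[k] (fun m => P.eval (m : ℝ) / ω m) n ≠ 0) :
    fdiff^[k] (fun m => P.eval (m : ℝ) * s m / ω m) n /
        fdiff^[k] (fun m => P.eval (m : ℝ) / ω m) n = L := by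
  have hsplit : (fun m : ℕ => P.eval (m : ℝ) * s m / ω m)
      = c • (fun m : ℕ => P.eval (m : ℝ)) + L • (fun m : ℕ => P.eval (m : ℝ) / ω m) := by
    funext m
    have hs : s m = L + c * ω m := by linarith [hrel m]
    simp only [Pi.add_apply, Pi.smul_apply, smul_eq_mul, hs]
    field_simp [hω m]
    ring
  have hpoly : (fwdDiff 1)^[k] (fun m : ℕ => P.eval (m : ℝ)) = 0 :=
    fwdDiff_iter_eval_natCast_eq_zero (by omega)
  rw [fdiff_eq_fwdDiff] at hden ⊢
  rw [hsplit, fwdDiff_iter_add, fwdDiff_iter_const_smul, fwdDiff_iter_const_smul, hpoly]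
  simp only [smul_zero, zero_add, Pi.smul_apply, smul_eq_mul]
  exact mul_div_cancel_right₀ L hden

/-- If s_n - s = c ω_n with c ≠ 0, then the transformation
    T_k^{(n)} = Δ^k[P_{k-1}(n) s_n/ω_n] / Δ^k[P_{k-1}(n)/ω_n] is exact. -/
theorem levin_type_exactness (k : ℕ) (hk : 1 ≤ k) (s ω : ℕ → ℝ) (L c : ℝ)
    (hc : c ≠ 0) (hω : ∀ n, ω n ≠ 0) (hrel : ∀ n, s n - L = c * ω n)
    (P : Polynomial ℝ) (hP : P.natDegree ≤ k - 1) (n : ℕ)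
    (hden : fdiff^[k] (fun m => P.eval (m : ℝ) / ω m) n ≠ 0) :
    fdiff^[k] (fun m => P.eval (m : ℝ) * s m / ω m) n /
        fdiff^[k] (fun m => P.eval (m : ℝ) / ω m) n = L :=
  levin_type_exactness_general k hk s ω L c hω hrel P hP n hden
end

section
/- For real x > 0, the factorial series ∑_{m=0}^∞ (-1)^m m!/(x)_{m+1} converges, whereas the corresponding power series ∑_{m=0}^∞ (-1)^m m!/x^{m+1} diverges for every finite x. -/
/-!
The terms `m! / (x)_{m+1}` of the factorial series decrease, since consecutive ones differ by
the factor `(m + 1) / (x + m + 1) ≤ 1`, and they tend to zero because Euler's limit formula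
`m! m^x / (x)_{m+1} → Γ(x)` makes them of size `Γ(x) m^{-x}`; the alternating series test
applies. The terms of the power series do not even tend to zero, as `|x|^m / m! → 0`.
-/

open Filter Topology Finset

theorem ascPochhammer_eval_eq_prod_range {R : Type*} [CommSemiring R] (n : ℕ) (r : R) :
    (ascPochhammer R n).eval r = ∏ j ∈ range n, (r + j) := by
  induction n with
  | zero => simp
  | succ n ih => rw [ascPochhammer_succ_eval, ih, prod_range_succ]

theorem factorial_div_ascPochhammer_succ_eval (x : ℝ) (m : ℕ) :
    ((m + 1).factorial : ℝ) / (ascPochhammer ℝ (m + 2)).eval x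
      = (m.factorial : ℝ) / (ascPochhammer ℝ (m + 1)).eval x * ((m + 1) / (x + (m + 1))) := by
  rw [ascPochhammer_succ_eval, div_mul_div_comm, Nat.factorial_succ]
  push_cast
  ring

theorem antitone_factorial_div_ascPochhammer_eval {x : ℝ} (hx : 0 < x) :
    Antitone fun m : ℕ => (m.factorial : ℝ) / (ascPochhammer ℝ (m + 1)).eval x := by
  refine antitone_nat_of_succ_le fun m => ?_
  have hratio : ((m : ℝ) + 1) / (x + (m + 1)) ≤ 1 := by
    rw [div_le_one (by positivity)]
    linarith
  have hpos := ascPochhammer_pos (m + 1) x hx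
  rw [factorial_div_ascPochhammer_succ_eval]
  exact mul_le_of_le_one_right (by positivity) hratio

theorem tendsto_factorial_div_ascPochhammer_eval_mul_rpow (x : ℝ) :
    Tendsto (fun m : ℕ => (m.factorial : ℝ) / (ascPochhammer ℝ (m + 1)).eval x * (m : ℝ) ^ x)
      atTop (𝓝 (Real.Gamma x)) := by
  refine (Real.GammaSeq_tendsto_Gamma x).congr fun m => ?_
  rw [Real.GammaSeq, ascPochhammer_eval_eq_prod_range]
  ring

theorem tendsto_factorial_div_ascPochhammer_eval_zero {x : ℝ} (hx : 0 < x) :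
    Tendsto (fun m : ℕ => (m.factorial : ℝ) / (ascPochhammer ℝ (m + 1)).eval x) atTop (𝓝 0) := by
  have hdecay : Tendsto (fun m : ℕ => (m : ℝ) ^ (-x)) atTop (𝓝 0) :=
    (tendsto_rpow_neg_atTop hx).comp tendsto_natCast_atTop_atTop
  have := (tendsto_factorial_div_ascPochhammer_eval_mul_rpow x).mul hdecay
  rw [mul_zero] at this
  refine this.congr' ?_
  filter_upwards [eventually_gt_atTop 0] with m hm
  rw [mul_assoc, ← Real.rpow_add (by positivity), add_neg_cancel, Real.rpow_zero, mul_one]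

theorem exists_tendsto_sum_range_neg_one_pow_mul_factorial_div_ascPochhammer_eval {x : ℝ}
    (hx : 0 < x) :
    ∃ L : ℝ, Tendsto (fun N => ∑ m ∈ range N,
      (-1 : ℝ) ^ m * (m.factorial : ℝ) / (ascPochhammer ℝ (m + 1)).eval x) atTop (𝓝 L) := by
  simp_rw [mul_div_assoc]
  exact (antitone_factorial_div_ascPochhammer_eval hx).tendsto_alternating_series_of_tendsto_zero
    (tendsto_factorial_div_ascPochhammer_eval_zero hx)

theorem tendsto_zero_of_tendsto_sum_range {G : Type*} [AddCommGroup G] [TopologicalSpace G]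
    [IsTopologicalAddGroup G] {f : ℕ → G} {L : G}
    (h : Tendsto (fun N => ∑ m ∈ range N, f m) atTop (𝓝 L)) : Tendsto f atTop (𝓝 0) := by
  have := (h.comp (tendsto_add_atTop_nat 1)).sub h
  simpa only [Function.comp_def, sum_range_succ, add_sub_cancel_left, sub_self] using this

theorem tendsto_factorial_div_pow_atTop {c : ℝ} (hc : 0 < c) :
    Tendsto (fun m : ℕ => (m.factorial : ℝ) / c ^ m) atTop atTop := by
  have hpos : ∀ m : ℕ, 0 < c ^ m / m.factorial := fun m => by positivity
  have := (tendsto_nhdsWithin_iff.2 ⟨FloorSemiring.tendsto_pow_div_factorial_atTop c,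
    Eventually.of_forall hpos⟩).inv_tendsto_nhdsGT_zero
  simpa only [Pi.inv_def, inv_div] using this

theorem not_tendsto_sum_range_neg_one_pow_mul_factorial_div_pow {x : ℝ} (hx : x ≠ 0) (L : ℝ) :
    ¬ Tendsto (fun N => ∑ m ∈ range N, (-1 : ℝ) ^ m * (m.factorial : ℝ) / x ^ (m + 1))
      atTop (𝓝 L) := by
  intro h
  have hnorm : (fun m : ℕ => ‖(-1 : ℝ) ^ m * (m.factorial : ℝ) / x ^ (m + 1)‖)
      = fun m => (m.factorial : ℝ) / |x| ^ m / |x| := by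
    ext m
    rw [norm_div, norm_mul, norm_pow, norm_neg, norm_one, one_pow, one_mul, Real.norm_natCast,
      norm_pow, Real.norm_eq_abs, pow_succ, div_mul_eq_div_div]
  have htop := (tendsto_factorial_div_pow_atTop (abs_pos.2 hx)).atTop_div_const (abs_pos.2 hx)
  rw [← hnorm] at htop
  exact not_tendsto_nhds_of_tendsto_atTop htop 0 (tendsto_zero_iff_norm_tendsto_zero.1 (tendsto_zero_of_tendsto_sum_range h))

/-- For x > 0, the factorial series ∑ (-1)^m m!/(x)_{m+1} converges, whereas the
    power series ∑ (-1)^m m!/x^{m+1} diverges for every (nonzero) finite x. -/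
theorem factorial_series_converges_power_series_diverges :
    (∀ x : ℝ, 0 < x →
      ∃ L : ℝ,
        Tendsto
          (fun N => ∑ m ∈ Finset.range N,
            (-1 : ℝ) ^ m * (m.factorial : ℝ) / (ascPochhammer ℝ (m + 1)).eval x)
          atTop (nhds L)) ∧
    (∀ x : ℝ, x ≠ 0 →
      ¬ ∃ L : ℝ,
        Tendsto
          (fun N => ∑ m ∈ Finset.range N,
            (-1 : ℝ) ^ m * (m.factorial : ℝ) / x ^ (m + 1))
          atTop (nhds L)) :=
  ⟨fun _ hx => exists_tendsto_sum_range_neg_one_pow_mul_factorial_div_ascPochhammer_eval hx,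
    fun _ hx ⟨L, hL⟩ => not_tendsto_sum_range_neg_one_pow_mul_factorial_div_pow hx L hL⟩
end

section
/- Suppose the remainders of a convergent sequence satisfy (s_n - s)/Δs_{n-1} = γn + δ for all n with γ ≠ 0. Then the transformation T_k^{(n)} = Δ^k[P_{k-1}(n) s_n / Δs_{n-1}] / Δ^k[P_{k-1}(n)/Δs_{n-1}] is exact (equals s) whenever P_{k-1} is a polynomial of degree at most k-2 in n and the denominator is nonzero. -/
open Filter

lemma fdiff_add_smul (f g : ℕ → ℝ) (c : ℝ) :
    fdiff (fun m => f m + c * g m) = fun m => fdiff f m + c * fdiff g m := by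
  funext m; simp [fdiff]; ring

lemma fdiff_iter_add_smul (j : ℕ) (f g : ℕ → ℝ) (c : ℝ) :
    fdiff^[j] (fun m => f m + c * g m) = fun m => fdiff^[j] f m + c * fdiff^[j] g m := by
  induction j generalizing f g with
  | zero => rfl
  | succ j ih =>
    rw [Function.iterate_succ_apply, Function.iterate_succ_apply,
      Function.iterate_succ_apply, fdiff_add_smul, ih]

lemma fdiff_poly (Q : Polynomial ℝ) :
    fdiff (fun m => Q.eval (m : ℝ)) =
      fun m : ℕ => (Q.comp (Polynomial.X + Polynomial.C 1) - Q).eval (m : ℝ) := by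
  funext m
  simp [fdiff, Polynomial.eval_comp]

lemma natDegree_comp_shift (Q : Polynomial ℝ) :
    (Q.comp (Polynomial.X + Polynomial.C 1)).natDegree = Q.natDegree := by
  rw [Polynomial.natDegree_comp, Polynomial.natDegree_X_add_C, mul_one]

lemma fdiff_iter_poly_zero (k : ℕ) (Q : Polynomial ℝ) (hQ : Q.natDegree < k) (n : ℕ) :
    fdiff^[k] (fun m => Q.eval (m : ℝ)) n = 0 := by
  induction k generalizing Q n with
  | zero => omega
  | succ k ih =>
    rw [Function.iterate_succ_apply, fdiff_poly]
    by_cases h0 : Q.comp (Polynomial.X + Polynomial.C 1) - Q = 0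
    · rw [h0]
      simp only [Polynomial.eval_zero]
      have : (fun _ : ℕ => (0:ℝ)) = fun m : ℕ => (0 : Polynomial ℝ).eval (m:ℝ) := by
        simp
      rw [this]
      clear hQ ih h0
      induction k with
      | zero => simp
      | succ k ih2 =>
        rw [Function.iterate_succ_apply, fdiff_poly]
        simpa using ih2
    · rcases Nat.eq_zero_or_pos Q.natDegree with hd | hd
      · exfalso
        apply h0
        obtain ⟨a, rfl⟩ := Polynomial.natDegree_eq_zero.mp hd
        simp
      · apply ih
        have hcomp := natDegree_comp_shift Q
        have hQ0 : Q ≠ 0 := fun h => by simp [h] at hd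
        have hc0 : Q.comp (Polynomial.X + Polynomial.C 1) ≠ 0 := by
          intro h; rw [h] at hcomp; simp at hcomp; omega
        have hdd : (Q.comp (Polynomial.X + Polynomial.C 1)).degree = Q.degree := by
          rw [Polynomial.degree_eq_natDegree hc0, Polynomial.degree_eq_natDegree hQ0, hcomp]
        have hdeg := Polynomial.degree_sub_lt hdd hc0
          (by rw [Polynomial.leadingCoeff_comp (by rw [Polynomial.natDegree_X_add_C]; omega)]
              rw [(Polynomial.monic_X_add_C (1:ℝ)).leadingCoeff, one_pow, mul_one])
        have := Polynomial.natDegree_lt_natDegree h0 hdeg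
        omega

/-- If (s_n - s)/Δs_{n-1} = γn + δ with γ ≠ 0, then
    T_k^{(n)} = Δ^k[P(n) s_n/Δs_{n-1}] / Δ^k[P(n)/Δs_{n-1}] equals s whenever P
    is a polynomial of degree ≤ k-2 and the denominator is nonzero. -/
theorem u_type_exactness (s : ℕ → ℝ) (L : ℝ)
    (hconv : Tendsto s atTop (nhds L)) (γ δ : ℝ) (hγ : γ ≠ 0)
    (hΔ : ∀ n : ℕ, s (n + 1) - s n ≠ 0)
    (hrel : ∀ n : ℕ, (s (n + 1) - L) / (s (n + 1) - s n) = γ * ((n : ℝ) + 1) + δ)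
    (k : ℕ) (hk : 2 ≤ k) (P : Polynomial ℝ) (hP : P.natDegree ≤ k - 2) (n : ℕ)
    (hden : fdiff^[k] (fun m => P.eval ((m : ℝ) + 1) / (s (m + 1) - s m)) n ≠ 0) :
    fdiff^[k] (fun m => P.eval ((m : ℝ) + 1) * s (m + 1) / (s (m + 1) - s m)) n /
        fdiff^[k] (fun m => P.eval ((m : ℝ) + 1) / (s (m + 1) - s m)) n = L := by
  set Q : Polynomial ℝ :=
    P.comp (Polynomial.X + Polynomial.C 1) *
      (Polynomial.C γ * (Polynomial.X + Polynomial.C 1) + Polynomial.C δ) with hQdef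
  have hQdeg : Q.natDegree < k := by
    have h1 : (P.comp (Polynomial.X + Polynomial.C 1)).natDegree ≤ k - 2 := by
      rw [natDegree_comp_shift]; exact hP
    have h2 : (Polynomial.C γ * (Polynomial.X + Polynomial.C 1) + Polynomial.C δ).natDegree ≤ 1 := by
      apply le_trans (Polynomial.natDegree_add_le _ _)
      simp only [Polynomial.natDegree_C, max_le_iff]
      refine ⟨le_trans Polynomial.natDegree_mul_le ?_, by omega⟩
      rw [Polynomial.natDegree_C, Polynomial.natDegree_X_add_C]
    have := Polynomial.natDegree_mul_le (p := P.comp (Polynomial.X + Polynomial.C 1))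
      (q := Polynomial.C γ * (Polynomial.X + Polynomial.C 1) + Polynomial.C δ)
    rw [← hQdef] at this
    omega
  have key : (fun m : ℕ => P.eval ((m : ℝ) + 1) * s (m + 1) / (s (m + 1) - s m)) =
      fun m : ℕ => Q.eval (m : ℝ) + L * (P.eval ((m : ℝ) + 1) / (s (m + 1) - s m)) := by
    funext m
    have h1 : P.eval ((m : ℝ) + 1) * s (m + 1) / (s (m + 1) - s m)
        - L * (P.eval ((m : ℝ) + 1) / (s (m + 1) - s m))
        = P.eval ((m : ℝ) + 1) * ((s (m + 1) - L) / (s (m + 1) - s m)) := by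
      field_simp
    have h2 := hrel m
    rw [h2] at h1
    have hQe : Q.eval (m : ℝ) = P.eval ((m : ℝ) + 1) * (γ * ((m : ℝ) + 1) + δ) := by
      simp [hQdef, Polynomial.eval_comp]
    linarith [h1, hQe]
  rw [key, fdiff_iter_add_smul]
  simp only [fdiff_iter_poly_zero k Q hQdeg, zero_add]
  rw [mul_div_assoc, div_self hden, mul_one]
end

section
/- The tail of the series ∑ (2m-1)!!/(2m+2)!! admits the closed form: for every n ≥ 0, ∑_{m=n+1}^∞ (2m-1)!!/(2m+2)!! = (1/2)_{n+1}/(n+1)!, and in particular ∑_{m=0}^∞ (2m-1)!!/(2m+2)!! = 1. -/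
/-!
With `r n = (a)_n / n!` one has `r n - r (n + 1) = (1 - a) r n / (n + 1)`, so the series telescopes
and its tails are the values `r n`, provided `r n → 0`. For `0 ≤ a < 1` this follows from
`r n = ∏_{k < n} (1 - (1 - a)/(k + 1)) ≤ exp (-(1 - a) H_n)` and the divergence of the harmonic
series. For `a = 1/2` the terms are `(2m-1)‼ / (2m+2)‼ = r m / (2 (m + 1))`.
-/

open Filter Finset Topology Nat

theorem hasSum_sub_succ_of_antitone {f : ℕ → ℝ} {l : ℝ} (hf : Antitone f)
    (hl : Tendsto f atTop (𝓝 l)) : HasSum (fun n => f n - f (n + 1)) (f 0 - l) := by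
  rw [hasSum_iff_tendsto_nat_of_nonneg fun n => sub_nonneg.2 (hf n.le_succ)]
  simp only [sum_range_sub']
  exact tendsto_const_nhds.sub hl

noncomputable def pochhammerRatio (a : ℝ) (n : ℕ) : ℝ :=
  (ascPochhammer ℝ n).eval a / n.factorial

namespace pochhammerRatio

variable {a : ℝ}

@[simp]
theorem zero : pochhammerRatio a 0 = 1 := by
  simp [pochhammerRatio]

theorem succ (n : ℕ) :
    pochhammerRatio a (n + 1) = pochhammerRatio a n * ((a + n) / (n + 1)) := by
  simp only [pochhammerRatio, ascPochhammer_succ_eval, Nat.factorial_succ, Nat.cast_mul]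
  push_cast
  field_simp

theorem nonneg (ha : 0 ≤ a) (n : ℕ) : 0 ≤ pochhammerRatio a n := by
  induction n with
  | zero => simp
  | succ n ih => rw [succ]; positivity

theorem sub_succ (n : ℕ) :
    pochhammerRatio a n - pochhammerRatio a (n + 1) = (1 - a) * pochhammerRatio a n / (n + 1) := by
  rw [succ]
  field_simp
  ring

theorem antitone (ha₀ : 0 ≤ a) (ha₁ : a ≤ 1) : Antitone (pochhammerRatio a) := by
  refine antitone_nat_of_succ_le fun n => sub_nonneg.1 ?_
  rw [sub_succ]
  have := nonneg ha₀ n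
  positivity

theorem le_exp_neg_harmonic (ha : 0 ≤ a) (n : ℕ) :
    pochhammerRatio a n ≤ Real.exp (-((1 - a) * ∑ k ∈ range n, 1 / ((k : ℝ) + 1))) := by
  induction n with
  | zero => simp
  | succ n ih =>
    have factor_le : (a + n) / (n + 1) ≤ Real.exp (-((1 - a) / (n + 1))) := by
      calc (a + n) / (n + 1) = -((1 - a) / (n + 1)) + 1 := by field_simp; ring
        _ ≤ _ := Real.add_one_le_exp _
    rw [succ, sum_range_succ, mul_add, neg_add, Real.exp_add, mul_one_div]
    exact mul_le_mul ih factor_le (by positivity) (Real.exp_nonneg _)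

theorem tendsto_zero (ha₀ : 0 ≤ a) (ha₁ : a < 1) :
    Tendsto (pochhammerRatio a) atTop (𝓝 0) := by
  have harmonic : Tendsto (fun n : ℕ => (1 - a) * ∑ k ∈ range n, 1 / ((k : ℝ) + 1)) atTop atTop :=
    Tendsto.const_mul_atTop (sub_pos.2 ha₁) Real.tendsto_sum_range_one_div_nat_succ_atTop
  exact squeeze_zero (nonneg ha₀) (le_exp_neg_harmonic ha₀)
    (Real.tendsto_exp_neg_atTop_nhds_zero.comp harmonic)

theorem hasSum_tail (ha₀ : 0 ≤ a) (ha₁ : a < 1) (n : ℕ) :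
    HasSum (fun m => (1 - a) * pochhammerRatio a (n + m) / ((n + m : ℕ) + 1))
      (pochhammerRatio a n) := by
  have h := hasSum_sub_succ_of_antitone (f := fun m => pochhammerRatio a (n + m))
    (fun _ _ hle => antitone ha₀ ha₁.le (Nat.add_le_add_left hle n))
    ((tendsto_zero ha₀ ha₁).comp (by simpa only [add_comm] using tendsto_add_atTop_nat n))
  simp only [← add_assoc, sub_succ, add_zero, sub_zero] at h
  exact_mod_cast h

end pochhammerRatio

theorem doubleFactorial_two_mul_sub_one_eq (m : ℕ) :
    ((2 * m - 1)‼ : ℝ) = 2 ^ m * (ascPochhammer ℝ m).eval (1 / 2) := by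
  induction m with
  | zero => simp
  | succ m ih =>
    rw [show 2 * (m + 1) - 1 = 2 * m + 1 by omega, Nat.doubleFactorial_add_one,
      ascPochhammer_succ_eval]
    push_cast
    rw [ih]
    ring

-- The factor `1 - 1 / 2` is kept unevaluated so that this rewrites the terms of `hasSum_tail`.
theorem doubleFactorial_div_eq_pochhammerRatio (m : ℕ) :
    ((2 * m - 1)‼ : ℝ) / (2 * m + 2)‼ = (1 - 1 / 2) * pochhammerRatio (1 / 2) m / ((m : ℝ) + 1) := by
  rw [show 2 * m + 2 = 2 * (m + 1) by ring, Nat.doubleFactorial_two_mul,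
    doubleFactorial_two_mul_sub_one_eq, pochhammerRatio, Nat.factorial_succ]
  push_cast
  field_simp
  ring

/-- The tail of ∑ (2m-1)!!/(2m+2)!! is (1/2)_{n+1}/(n+1)!, and the full sum is 1. -/
theorem double_factorial_series_tail (n : ℕ) :
    (∑' m : ℕ,
        (Nat.doubleFactorial (2 * (n + 1 + m) - 1) : ℝ) /
          (Nat.doubleFactorial (2 * (n + 1 + m) + 2) : ℝ)
      = (ascPochhammer ℝ (n + 1)).eval (1 / 2 : ℝ) / ((n + 1).factorial : ℝ)) ∧
    (∑' m : ℕ,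
        (Nat.doubleFactorial (2 * m - 1) : ℝ) /
          (Nat.doubleFactorial (2 * m + 2) : ℝ) = 1) := by
  have hasSum_tail (k : ℕ) := pochhammerRatio.hasSum_tail (a := 1 / 2) (by norm_num) (by norm_num) k
  simp only [← doubleFactorial_div_eq_pochhammerRatio] at hasSum_tail
  constructor
  · exact (hasSum_tail (n + 1)).tsum_eq
  · simpa using (hasSum_tail 0).tsum_eq
end
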